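/- In the category Graph of directed multigraphs, for every AC ac_P over a finite graph P all of whose constituent graphs are finite and every morphism b : P → P' with P' finite, there exists an AC Shift(b, ac_P) over P' (again with finite constituent graphs) such that for every graph H and every morphism n : P' → H: n ∘ b ⊨ ac_P if and only if n ⊨ Shift(b, ac_P). -/

import Mathlib

open CategoryTheory CategoryTheory.Limits

universe v u

variable {C : Type u} [Category.{v} C]

/-- A plain rule: a span `L ⟵l I ⟶r R` with `l` and `r` monomorphisms. -/
structure PlainRule (C : Type u) [Category.{v} C] : Type (max u v) where
  L : C
  I : C
  R : C
  l : I ⟶ L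
  r : I ⟶ R
  mono_l : Mono l
  mono_r : Mono r

/-- An AC-disregarding direct transformation `G ⇒_(p,m) H`: a double pushout with
context `D`, match `m` and comatch `cm`. -/
structure Trafo (p : PlainRule C) (G H : C) : Type (max u v) where
  m : p.L ⟶ G
  D : C
  f : p.I ⟶ D
  k : D ⟶ G
  c : D ⟶ H
  cm : p.R ⟶ H
  po1 : IsPushout p.l f m k
  po2 : IsPushout p.r f cm c

/-- A pair of AC-disregarding transformations `H₁ ⇐_(p₁,m₁) G ⇒_(p₂,m₂) H₂`. -/
structure TrafoPair (p₁ p₂ : PlainRule C) : Type (max u v) where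
  H₁ : C
  G : C
  H₂ : C
  t₁ : Trafo p₁ G H₁
  t₂ : Trafo p₂ G H₂

/-- An extension diagram embedding `t'` into `t` via extension morphism `ext`. -/
structure TrafoEmbedding {p : PlainRule C} {G' H' G H : C}
    (t' : Trafo p G' H') (t : Trafo p G H) (ext : G' ⟶ G) : Type (max u v) where
  d : t'.D ⟶ t.D
  h : H' ⟶ H
  match_eq : t'.m ≫ ext = t.m
  f_eq : t'.f ≫ d = t.f
  po1 : IsPushout t'.k d ext t.k
  po2 : IsPushout t'.c d h t.c

/-- A transformation pair embedded into another via a common extension morphism. -/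
structure PairEmbedding {p₁ p₂ : PlainRule C} (tp' tp : TrafoPair p₁ p₂)
    (ext : tp'.G ⟶ tp.G) : Type (max u v) where
  e₁ : TrafoEmbedding tp'.t₁ tp.t₁ ext
  e₂ : TrafoEmbedding tp'.t₂ tp.t₂ ext

/-- Parallel independence of a plain transformation pair. -/
def TrafoPair.ParallelIndep {p₁ p₂ : PlainRule C} (tp : TrafoPair p₁ p₂) : Prop :=
  (∃ d₁₂ : p₁.L ⟶ tp.t₂.D, d₁₂ ≫ tp.t₂.k = tp.t₁.m) ∧
  (∃ d₂₁ : p₂.L ⟶ tp.t₁.D, d₂₁ ≫ tp.t₁.k = tp.t₂.m)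

/-- Use-delete conflict: no commuting morphism `d₁₂ : L₁ ⟶ D₂` exists. -/
def TrafoPair.UseDelete {p₁ p₂ : PlainRule C} (tp : TrafoPair p₁ p₂) : Prop :=
  ¬ ∃ d₁₂ : p₁.L ⟶ tp.t₂.D, d₁₂ ≫ tp.t₂.k = tp.t₁.m

/-- Delete-use conflict: no commuting morphism `d₂₁ : L₂ ⟶ D₁` exists. -/
def TrafoPair.DeleteUse {p₁ p₂ : PlainRule C} (tp : TrafoPair p₁ p₂) : Prop :=
  ¬ ∃ d₂₁ : p₂.L ⟶ tp.t₁.D, d₂₁ ≫ tp.t₁.k = tp.t₂.m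

/-- A transformation pair is in conflict (parallel dependent) if it is not
parallel independent. -/
def TrafoPair.InConflict {p₁ p₂ : PlainRule C} (tp : TrafoPair p₁ p₂) : Prop :=
  ¬ tp.ParallelIndep

/-- `tpI` is an initial transformation pair for `tp`. -/
def IsInitialTrafoPairFor {p₁ p₂ : PlainRule C} (tpI tp : TrafoPair p₁ p₂) : Prop :=
  ∃ fI : tpI.G ⟶ tp.G, Nonempty (PairEmbedding tpI tp fI) ∧
    ∀ (tp' : TrafoPair p₁ p₂) (f : tp'.G ⟶ tp.G), PairEmbedding tp' tp f →
      ∃! g : tpI.G ⟶ tp'.G, Nonempty (PairEmbedding tpI tp' g) ∧ g ≫ f = fI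

/-- Two transformation pairs are isomorphic if each is embedded into the other via
an isomorphism as extension morphism. -/
def PairIso {p₁ p₂ : PlainRule C} (tp tp' : TrafoPair p₁ p₂) : Prop :=
  (∃ e : tp.G ⟶ tp'.G, IsIso e ∧ Nonempty (PairEmbedding tp tp' e)) ∧
  (∃ e' : tp'.G ⟶ tp.G, IsIso e' ∧ Nonempty (PairEmbedding tp' tp e'))

section Coproducts

variable [HasBinaryCoproducts C]

lemma isPushout_coprod_left {A B X : C} (g : A ⟶ B) :
    IsPushout g (coprod.inl : A ⟶ A ⨿ X) (coprod.inl : B ⟶ B ⨿ X)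
      (coprod.map g (𝟙 X)) := by
  have w : CommSq g (coprod.inl : A ⟶ A ⨿ X) (coprod.inl : B ⟶ B ⨿ X)
      (coprod.map g (𝟙 X)) := ⟨by simp⟩
  refine IsPushout.of_isColimit' w ?_
  have key : ∀ {Z : C} (u : B ⟶ Z) (v : A ⨿ X ⟶ Z), g ≫ u = coprod.inl ≫ v →
      coprod.map g (𝟙 X) ≫ coprod.desc u (coprod.inr ≫ v) = v := by
    intro Z u v h
    apply coprod.hom_ext
    · rw [coprod.inl_map_assoc, coprod.inl_desc, h]
    · rw [coprod.inr_map_assoc, coprod.inr_desc, Category.id_comp]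
  have key2 : ∀ {Z : C} (u : B ⟶ Z) (v : A ⨿ X ⟶ Z) (mm : B ⨿ X ⟶ Z),
      coprod.inl ≫ mm = u → coprod.map g (𝟙 X) ≫ mm = v →
      mm = coprod.desc u (coprod.inr ≫ v) := by
    intro Z u v mm h1 h2
    apply coprod.hom_ext
    · rw [coprod.inl_desc, h1]
    · rw [coprod.inr_desc, ← h2, coprod.inr_map_assoc, Category.id_comp]
  exact PushoutCocone.IsColimit.mk w.w
    (fun s => coprod.desc s.inl (coprod.inr ≫ s.inr))
    (fun s => coprod.inl_desc _ _)
    (fun s => key s.inl s.inr s.condition)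
    (fun s mm h1 h2 => key2 s.inl s.inr mm h1 h2)

lemma isPushout_coprod_right {A B X : C} (g : A ⟶ B) :
    IsPushout g (coprod.inr : A ⟶ X ⨿ A) (coprod.inr : B ⟶ X ⨿ B)
      (coprod.map (𝟙 X) g) := by
  have w : CommSq g (coprod.inr : A ⟶ X ⨿ A) (coprod.inr : B ⟶ X ⨿ B)
      (coprod.map (𝟙 X) g) := ⟨by simp⟩
  refine IsPushout.of_isColimit' w ?_
  have key : ∀ {Z : C} (u : B ⟶ Z) (v : X ⨿ A ⟶ Z), g ≫ u = coprod.inr ≫ v →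
      coprod.map (𝟙 X) g ≫ coprod.desc (coprod.inl ≫ v) u = v := by
    intro Z u v h
    apply coprod.hom_ext
    · rw [coprod.inl_map_assoc, coprod.inl_desc, Category.id_comp]
    · rw [coprod.inr_map_assoc, coprod.inr_desc, h]
  have key2 : ∀ {Z : C} (u : B ⟶ Z) (v : X ⨿ A ⟶ Z) (mm : X ⨿ B ⟶ Z),
      coprod.inr ≫ mm = u → coprod.map (𝟙 X) g ≫ mm = v →
      mm = coprod.desc (coprod.inl ≫ v) u := by
    intro Z u v mm h1 h2
    apply coprod.hom_ext
    · rw [coprod.inl_desc, ← h2, coprod.inl_map_assoc, Category.id_comp]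
    · rw [coprod.inr_desc, h1]
  exact PushoutCocone.IsColimit.mk w.w
    (fun s => coprod.desc (coprod.inl ≫ s.inr) s.inl)
    (fun s => coprod.inr_desc _ _)
    (fun s => key s.inl s.inr s.condition)
    (fun s mm h1 h2 => key2 s.inl s.inr mm h1 h2)

/-- The transformation applying `p` at the coproduct injection `inl : L ⟶ L ⨿ X`. -/
noncomputable def coprodTrafoL (p : PlainRule C) (X : C) : Trafo p (p.L ⨿ X) (p.R ⨿ X) where
  m := coprod.inl
  D := p.I ⨿ X
  f := coprod.inl
  k := coprod.map p.l (𝟙 X)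
  c := coprod.map p.r (𝟙 X)
  cm := coprod.inl
  po1 := isPushout_coprod_left p.l
  po2 := isPushout_coprod_left p.r

/-- The transformation applying `p` at the coproduct injection `inr : L ⟶ X ⨿ L`. -/
noncomputable def coprodTrafoR (p : PlainRule C) (X : C) : Trafo p (X ⨿ p.L) (X ⨿ p.R) where
  m := coprod.inr
  D := X ⨿ p.I
  f := coprod.inr
  k := coprod.map (𝟙 X) p.l
  c := coprod.map (𝟙 X) p.r
  cm := coprod.inr
  po1 := isPushout_coprod_right p.l
  po2 := isPushout_coprod_right p.r

/-- The transformation pair `tp_(L₁+L₂) : R₁+L₂ ⇐_(p₁,i₁) L₁+L₂ ⇒_(p₂,i₂) L₁+R₂`. -/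
noncomputable def coprodPair (p₁ p₂ : PlainRule C) : TrafoPair p₁ p₂ where
  H₁ := p₁.R ⨿ p₂.L
  G := p₁.L ⨿ p₂.L
  H₂ := p₁.L ⨿ p₂.R
  t₁ := coprodTrafoL p₁ p₂.L
  t₂ := coprodTrafoR p₂ p₁.L

end Coproducts

/-! ## The category `MGraph` of directed multigraphs -/

/-- A directed multigraph: vertices, edges, and source/target maps. -/
structure MGraph : Type 1 where
  V : Type
  E : Type
  s : E → V
  t : E → V

/-- A morphism of directed multigraphs. -/
@[ext]
structure MGraphHom (G H : MGraph) where
  onV : G.V → H.V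
  onE : G.E → H.E
  comm_s : ∀ e, H.s (onE e) = onV (G.s e)
  comm_t : ∀ e, H.t (onE e) = onV (G.t e)

instance : Category MGraph where
  Hom := MGraphHom
  id G := ⟨fun v => v, fun e => e, fun _ => rfl, fun _ => rfl⟩
  comp f g := ⟨fun v => g.onV (f.onV v), fun e => g.onE (f.onE e),
    fun e => by rw [g.comm_s, f.comm_s], fun e => by rw [g.comm_t, f.comm_t]⟩

lemma MGraph.hom_ext' {G H : MGraph} {f g : G ⟶ H}
    (h1 : MGraphHom.onV f = MGraphHom.onV g) (h2 : MGraphHom.onE f = MGraphHom.onE g) :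
    f = g := MGraphHom.ext h1 h2

/-- A multigraph is finite if its vertex and edge types are finite. -/
def MGraph.Fin (G : MGraph) : Prop := Finite G.V ∧ Finite G.E

/-- The class `M` of injective multigraph morphisms. -/
def InjHom {G H : MGraph} (f : G ⟶ H) : Prop :=
  Function.Injective (MGraphHom.onV f) ∧ Function.Injective (MGraphHom.onE f)

/-- A pair of morphisms with common codomain is jointly surjective. -/
def JointlySurj {A B K : MGraph} (f : A ⟶ K) (g : B ⟶ K) : Prop :=
  (∀ v : K.V, (∃ a, MGraphHom.onV f a = v) ∨ (∃ b, MGraphHom.onV g b = v)) ∧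
  (∀ e : K.E, (∃ a, MGraphHom.onE f a = e) ∨ (∃ b, MGraphHom.onE g b = e))

/-! ### Binary coproducts of multigraphs -/

/-- Disjoint union of multigraphs. -/
def MGraph.sum (G H : MGraph) : MGraph where
  V := G.V ⊕ H.V
  E := G.E ⊕ H.E
  s := Sum.elim (fun e => Sum.inl (G.s e)) (fun e => Sum.inr (H.s e))
  t := Sum.elim (fun e => Sum.inl (G.t e)) (fun e => Sum.inr (H.t e))

def MGraph.inl' (G H : MGraph) : G ⟶ G.sum H :=
  ⟨Sum.inl, Sum.inl, fun _ => rfl, fun _ => rfl⟩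

def MGraph.inr' (G H : MGraph) : H ⟶ G.sum H :=
  ⟨Sum.inr, Sum.inr, fun _ => rfl, fun _ => rfl⟩

def MGraph.desc' {G H K : MGraph} (f : G ⟶ K) (g : H ⟶ K) : G.sum H ⟶ K where
  onV := Sum.elim (MGraphHom.onV f) (MGraphHom.onV g)
  onE := Sum.elim (MGraphHom.onE f) (MGraphHom.onE g)
  comm_s := by rintro (e | e) <;> simp [MGraph.sum, MGraphHom.comm_s]
  comm_t := by rintro (e | e) <;> simp [MGraph.sum, MGraphHom.comm_t]

lemma MGraph.inl'_desc' {G H K : MGraph} (f : G ⟶ K) (g : H ⟶ K) :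
    MGraph.inl' G H ≫ MGraph.desc' f g = f := by
  apply MGraph.hom_ext' <;> rfl

lemma MGraph.inr'_desc' {G H K : MGraph} (f : G ⟶ K) (g : H ⟶ K) :
    MGraph.inr' G H ≫ MGraph.desc' f g = g := by
  apply MGraph.hom_ext' <;> rfl

lemma MGraph.sum_hom_ext {G H K : MGraph} {f g : G.sum H ⟶ K}
    (h1 : MGraph.inl' G H ≫ f = MGraph.inl' G H ≫ g)
    (h2 : MGraph.inr' G H ≫ f = MGraph.inr' G H ≫ g) : f = g := by
  apply MGraph.hom_ext'
  · funext v
    rcases v with v | v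
    · exact congrFun (congrArg MGraphHom.onV h1) v
    · exact congrFun (congrArg MGraphHom.onV h2) v
  · funext e
    rcases e with e | e
    · exact congrFun (congrArg MGraphHom.onE h1) e
    · exact congrFun (congrArg MGraphHom.onE h2) e

def MGraph.sumCofanIsColimit (G H : MGraph) :
    IsColimit (BinaryCofan.mk (MGraph.inl' G H) (MGraph.inr' G H)) :=
  BinaryCofan.isColimitMk
    (fun s => MGraph.desc' s.inl s.inr)
    (fun s => MGraph.inl'_desc' _ _)
    (fun s => MGraph.inr'_desc' _ _)
    (fun s mm h1 h2 => by
      apply MGraph.sum_hom_ext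
      · rw [h1]; exact (MGraph.inl'_desc' _ _).symm
      · rw [h2]; exact (MGraph.inr'_desc' _ _).symm)

instance (G H : MGraph) : HasColimit (pair G H) :=
  HasColimit.mk ⟨_, MGraph.sumCofanIsColimit G H⟩

instance : HasBinaryCoproducts MGraph := hasBinaryCoproducts_of_hasColimit_pair MGraph

/-! ### Nested application conditions -/

/-- Nested application conditions over a multigraph. -/
inductive AC : MGraph → Type 1 where
  | tru : (P : MGraph) → AC P
  | ex : {P Q : MGraph} → (P ⟶ Q) → AC Q → AC P
  | neg : {P : MGraph} → AC P → AC P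
  | conj : {P : MGraph} → AC P → AC P → AC P

/-- Satisfaction of an application condition by a morphism, where the extension
morphism `q` is required to be in the class `M` of injective morphisms. -/
def AC.Sat : {P G : MGraph} → (P ⟶ G) → AC P → Prop
  | _, _, _, AC.tru _ => True
  | _, G, p, AC.ex a c => ∃ q : _ ⟶ G, InjHom q ∧ a ≫ q = p ∧ AC.Sat q c
  | _, _, p, AC.neg c => ¬ AC.Sat p c
  | _, _, p, AC.conj c₁ c₂ => AC.Sat p c₁ ∧ AC.Sat p c₂

/-- All constituent graphs of an application condition are finite. -/
def AC.FinGraphs : {P : MGraph} → AC P → Prop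
  | _, AC.tru _ => True
  | _, AC.ex (Q := Q) _ c => Q.Fin ∧ AC.FinGraphs c
  | _, AC.neg c => AC.FinGraphs c
  | _, AC.conj c₁ c₂ => AC.FinGraphs c₁ ∧ AC.FinGraphs c₂

/-- Equivalence of ACs: exactly the same morphisms satisfy them. -/
def AC.Equiv {P : MGraph} (c c' : AC P) : Prop :=
  ∀ {G : MGraph} (p : P ⟶ G), AC.Sat p c ↔ AC.Sat p c'

/-- A rule with application condition. -/
structure Rule : Type 1 where
  p : PlainRule MGraph
  ac : AC p.L

/-- A rule is finite if its rule graphs and the constituent graphs of its AC are. -/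
def RuleFin (ρ : Rule) : Prop :=
  ρ.p.L.Fin ∧ ρ.p.I.Fin ∧ ρ.p.R.Fin ∧ AC.FinGraphs ρ.ac

/-- A transformation pair via rules with ACs: the matches satisfy the rule ACs. -/
structure RTrafoPair (ρ₁ ρ₂ : Rule) : Type 1 where
  tp : TrafoPair ρ₁.p ρ₂.p
  sat₁ : AC.Sat tp.t₁.m ρ₁.ac
  sat₂ : AC.Sat tp.t₂.m ρ₂.ac

/-- Parallel independence for transformations via rules with ACs. -/
def RParallelIndep (ρ₁ ρ₂ : Rule) (tp : TrafoPair ρ₁.p ρ₂.p) : Prop :=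
  (∃ d₁₂ : ρ₁.p.L ⟶ tp.t₂.D, d₁₂ ≫ tp.t₂.k = tp.t₁.m ∧
      AC.Sat (d₁₂ ≫ tp.t₂.c) ρ₁.ac) ∧
  (∃ d₂₁ : ρ₂.p.L ⟶ tp.t₁.D, d₂₁ ≫ tp.t₁.k = tp.t₂.m ∧
      AC.Sat (d₂₁ ≫ tp.t₁.c) ρ₂.ac)

/-! Shifting commutes with negation and conjunction. For `∃(a, c)` with `a : P ⟶ Q`, the
shift along `b : P ⟶ P'` is the disjunction, over all overlaps `P' ⟶ K ⟵ Q` of `b` and `a`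
(jointly surjective, injective on `Q`, commuting with `a` and `b`), of
`∃(P' ⟶ K, Shift(Q ⟶ K, c))`. A witness `q ∈ M` of `n ∘ b ⊨ ∃(a, c)` factors injectively
through the overlap given by the image of `[n, q] : P' + Q ⟶ H`, and conversely. There are only
finitely many overlaps, since they are quotients of the finite graph `P' + Q`. -/

instance (X : Type) [Finite X] : Finite (Setoid X) :=
  Finite.of_injective (fun r : Setoid X => ⇑r) fun _ _ h => Setoid.eq_iff_rel_eq.mpr h

lemma InjHom.comp {G H K : MGraph} {f : G ⟶ H} {g : H ⟶ K}
    (hf : InjHom f) (hg : InjHom g) : InjHom (f ≫ g) :=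
  ⟨hg.1.comp hf.1, hg.2.comp hf.2⟩

lemma InjHom.of_comp {G H K : MGraph} {f : G ⟶ H} {g : H ⟶ K}
    (hfg : InjHom (f ≫ g)) : InjHom f :=
  ⟨Function.Injective.of_comp (f := MGraphHom.onV g) hfg.1,
    Function.Injective.of_comp (f := MGraphHom.onE g) hfg.2⟩

lemma InjHom.cancel_right {G H K : MGraph} {f f' : G ⟶ H} {g : H ⟶ K}
    (hg : InjHom g) (h : f ≫ g = f' ≫ g) : f = f' :=
  MGraph.hom_ext' (hg.1.comp_left (congrArg MGraphHom.onV h))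
    (hg.2.comp_left (congrArg MGraphHom.onE h))

lemma MGraph.sum_fin {G H : MGraph} (hG : G.Fin) (hH : H.Fin) : (G.sum H).Fin :=
  have := hG.1; have := hG.2; have := hH.1; have := hH.2
  ⟨inferInstanceAs (Finite (G.V ⊕ H.V)), inferInstanceAs (Finite (G.E ⊕ H.E))⟩

namespace AC

variable {P : MGraph}

def falsum (P : MGraph) : AC P := neg (tru P)

def disj (c₁ c₂ : AC P) : AC P := neg (conj (neg c₁) (neg c₂))

def listDisj : List (AC P) → AC P
  | [] => falsum P
  | c :: l => disj c (listDisj l)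

lemma sat_listDisj {G : MGraph} (n : P ⟶ G) (l : List (AC P)) :
    Sat n (listDisj l) ↔ ∃ c ∈ l, Sat n c := by
  induction l with
  | nil => simp [listDisj, falsum, Sat]
  | cons c l ih =>
    simp only [listDisj, disj, Sat, ih, List.exists_mem_cons_iff, not_and_or, not_not]

lemma finGraphs_listDisj {l : List (AC P)} (h : ∀ c ∈ l, FinGraphs c) :
    FinGraphs (listDisj l) := by
  induction l with
  | nil => trivial
  | cons c l ih => simp_all [listDisj, disj, FinGraphs]

noncomputable def iDisj {ι : Type*} [Fintype ι] (c : ι → AC P) : AC P :=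
  listDisj (Finset.univ.toList.map c)

lemma sat_iDisj {ι : Type*} [Fintype ι] {G : MGraph} (n : P ⟶ G) (c : ι → AC P) :
    Sat n (iDisj c) ↔ ∃ i, Sat n (c i) := by
  simp [iDisj, sat_listDisj]

lemma finGraphs_iDisj {ι : Type*} [Fintype ι] {c : ι → AC P} (h : ∀ i, FinGraphs (c i)) :
    FinGraphs (iDisj c) :=
  finGraphs_listDisj (by simpa [iDisj] using h)

end AC

structure MGraph.Congruence (G : MGraph) where
  rV : Setoid G.V
  rE : Setoid G.E
  s_congr : ∀ ⦃e₁ e₂⦄, rE e₁ e₂ → rV (G.s e₁) (G.s e₂)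
  t_congr : ∀ ⦃e₁ e₂⦄, rE e₁ e₂ → rV (G.t e₁) (G.t e₂)

namespace MGraph.Congruence

variable {G H : MGraph}

lemma finite (hG : G.Fin) : Finite G.Congruence :=
  have := hG.1; have := hG.2
  Finite.of_injective (fun r : G.Congruence => (r.rV, r.rE)) <| by
    rintro ⟨⟩ ⟨⟩ h
    cases h
    rfl

def quotient (r : G.Congruence) : MGraph where
  V := Quotient r.rV
  E := Quotient r.rE
  s := Quotient.map G.s r.s_congr
  t := Quotient.map G.t r.t_congr

lemma quotient_fin (r : G.Congruence) (hG : G.Fin) : r.quotient.Fin :=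
  have := hG.1; have := hG.2; ⟨Quotient.finite _, Quotient.finite _⟩

def proj (r : G.Congruence) : G ⟶ r.quotient where
  onV := Quotient.mk _
  onE := Quotient.mk _
  comm_s _ := rfl
  comm_t _ := rfl

def ker (f : G ⟶ H) : G.Congruence where
  rV := Setoid.ker f.onV
  rE := Setoid.ker f.onE
  s_congr e₁ e₂ h := by
    change f.onV _ = f.onV _
    rw [← f.comm_s, ← f.comm_s]
    exact congrArg H.s h
  t_congr e₁ e₂ h := by
    change f.onV _ = f.onV _
    rw [← f.comm_t, ← f.comm_t]
    exact congrArg H.t h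

def kerLift (f : G ⟶ H) : (ker f).quotient ⟶ H where
  onV := Quotient.lift f.onV fun _ _ => id
  onE := Quotient.lift f.onE fun _ _ => id
  comm_s := Quotient.ind f.comm_s
  comm_t := Quotient.ind f.comm_t

@[simp]
lemma proj_kerLift (f : G ⟶ H) : (ker f).proj ≫ kerLift f = f := rfl

lemma injHom_kerLift (f : G ⟶ H) : InjHom (kerLift f) :=
  ⟨fun x y => Quotient.inductionOn₂ x y fun _ _ h => Quotient.sound h,
    fun x y => Quotient.inductionOn₂ x y fun _ _ h => Quotient.sound h⟩

end MGraph.Congruence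

/-- Overlaps `P' ⟶ K ⟵ Q` are presented as quotients `K` of `P' + Q`, which makes them jointly
surjective. -/
structure Overlap {P P' Q : MGraph} (a : P ⟶ Q) (b : P ⟶ P') where
  r : (P'.sum Q).Congruence
  injHom_inr : InjHom (MGraph.inr' P' Q ≫ r.proj)
  comm : a ≫ MGraph.inr' P' Q ≫ r.proj = b ≫ MGraph.inl' P' Q ≫ r.proj

namespace Overlap

variable {P P' Q H : MGraph} {a : P ⟶ Q} {b : P ⟶ P'}

lemma finite (hP' : P'.Fin) (hQ : Q.Fin) : Finite (Overlap a b) :=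
  have := MGraph.Congruence.finite (MGraph.sum_fin hP' hQ)
  Finite.of_injective Overlap.r <| by
    rintro ⟨⟩ ⟨⟩ h
    cases h
    rfl

abbrev graph (o : Overlap a b) : MGraph := o.r.quotient

abbrev a' (o : Overlap a b) : P' ⟶ o.graph := MGraph.inl' P' Q ≫ o.r.proj

abbrev b' (o : Overlap a b) : Q ⟶ o.graph := MGraph.inr' P' Q ≫ o.r.proj

lemma graph_fin (o : Overlap a b) (hP' : P'.Fin) (hQ : Q.Fin) : o.graph.Fin :=
  o.r.quotient_fin (MGraph.sum_fin hP' hQ)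

def image (n : P' ⟶ H) (q : Q ⟶ H) (hq : InjHom q) (hcomm : a ≫ q = b ≫ n) :
    Overlap a b where
  r := .ker (MGraph.desc' n q)
  injHom_inr := by
    have : InjHom ((MGraph.inr' P' Q ≫ (MGraph.Congruence.ker (MGraph.desc' n q)).proj) ≫
        MGraph.Congruence.kerLift _) := by
      rwa [Category.assoc, MGraph.Congruence.proj_kerLift, MGraph.inr'_desc']
    exact this.of_comp
  comm := by
    apply (MGraph.Congruence.injHom_kerLift (MGraph.desc' n q)).cancel_right
    simp [MGraph.inl'_desc', MGraph.inr'_desc', hcomm]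

end Overlap

lemma AC.sat_comp_ex_iff {P P' Q H : MGraph} (a : P ⟶ Q) (c : AC Q) (b : P ⟶ P')
    (n : P' ⟶ H) :
    Sat (b ≫ n) (ex a c) ↔
      ∃ (o : Overlap a b) (k : o.graph ⟶ H), InjHom k ∧ o.a' ≫ k = n ∧ Sat (o.b' ≫ k) c := by
  constructor
  · rintro ⟨q, hq, hcomm, hsat⟩
    refine ⟨.image n q hq hcomm, MGraph.Congruence.kerLift _,
      MGraph.Congruence.injHom_kerLift _, ?_, ?_⟩
    · exact MGraph.inl'_desc' n q
    · exact hsat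
  · rintro ⟨o, k, hk, rfl, hsat⟩
    refine ⟨o.b' ≫ k, o.injHom_inr.comp hk, ?_, hsat⟩
    simpa using congrArg (· ≫ k) o.comm

theorem AC.exists_shift {P : MGraph} (ac : AC P) (hac : FinGraphs ac) {P' : MGraph}
    (hP' : P'.Fin) (b : P ⟶ P') :
    ∃ ac' : AC P', FinGraphs ac' ∧ ∀ (H : MGraph) (n : P' ⟶ H), Sat (b ≫ n) ac ↔ Sat n ac' := by
  induction ac generalizing P' with
  | tru P => exact ⟨tru P', trivial, fun _ _ => Iff.rfl⟩
  | neg c ih =>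
    obtain ⟨c', hfin, hsat⟩ := ih hac hP' b
    exact ⟨neg c', hfin, fun H n => not_congr (hsat H n)⟩
  | conj c₁ c₂ ih₁ ih₂ =>
    obtain ⟨c₁', hfin₁, hsat₁⟩ := ih₁ hac.1 hP' b
    obtain ⟨c₂', hfin₂, hsat₂⟩ := ih₂ hac.2 hP' b
    exact ⟨conj c₁' c₂', ⟨hfin₁, hfin₂⟩, fun H n => and_congr (hsat₁ H n) (hsat₂ H n)⟩
  | @ex P Q a c ih =>
    obtain ⟨hQ, hc⟩ := hac
    choose c' hfin hsat using fun o : Overlap a b => ih hc (o.graph_fin hP' hQ) o.b'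
    have := Overlap.finite (a := a) (b := b) hP' hQ
    have := Fintype.ofFinite (Overlap a b)
    refine ⟨iDisj fun o => ex o.a' (c' o), finGraphs_iDisj fun o => ?_, fun H n => ?_⟩
    · exact ⟨o.graph_fin hP' hQ, hfin o⟩
    · rw [sat_comp_ex_iff, sat_iDisj]
      simp only [Sat, hsat]

theorem shift_of_ACs_over_morphisms_general
    {P P' : MGraph} (hP' : P'.Fin)
    (ac : AC P) (hac : AC.FinGraphs ac) (b : P ⟶ P') :
    ∃ ac' : AC P', AC.FinGraphs ac' ∧
      ∀ (H : MGraph) (n : P' ⟶ H), AC.Sat (b ≫ n) ac ↔ AC.Sat n ac' :=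
  ac.exists_shift hac hP' b

/-- Shifting of application conditions over morphisms in the category of directed
multigraphs: for every AC `ac` over a finite graph `P` with finite constituent graphs
and every morphism `b : P ⟶ P'` with `P'` finite, there is an AC over `P'` (again with
finite constituent graphs) that is satisfied by `n : P' ⟶ H` iff `n ∘ b` satisfies
`ac`. -/
theorem shift_of_ACs_over_morphisms
    {P P' : MGraph} (hP : P.Fin) (hP' : P'.Fin)
    (ac : AC P) (hac : AC.FinGraphs ac) (b : P ⟶ P') :
    ∃ ac' : AC P', AC.FinGraphs ac' ∧
      ∀ (H : MGraph) (n : P' ⟶ H), AC.Sat (b ≫ n) ac ↔ AC.Sat n ac' :=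
  shift_of_ACs_over_morphisms_general hP' ac hac b
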